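/- A distance space (X,d) is an H-distance space (any two distinct points x, y admit δ > 0 with B(x,d,δ) ∩ B(y,d,δ) = ∅) if and only if every convergent sequence in X has a unique limit point. -/
import Mathlib


open Finset Filter Topology

def IsDistance {X : Type*} (d : X → X → ℝ) : Prop :=
  (∀ x y, 0 ≤ d x y) ∧ ∀ x y, d x y + d y x = 0 ↔ x = y

noncomputable def supDist {X : Type*} (d : X → X → ℝ) {m : ℕ} (x y : Fin m → X) : ℝ :=
  ⨆ i, d (x i) (y i)

noncomputable def sumDist {X : Type*} (d : X → X → ℝ) {m : ℕ} (x y : Fin m → X) : ℝ :=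
  ∑ i, d (x i) (y i)

def ordL {X : Type*} [PartialOrder X] {m : ℕ} (L : Finset (Fin m)) (x y : Fin m → X) : Prop :=
  ∀ i, (i ∈ L → x i ≤ y i) ∧ (i ∉ L → y i ≤ x i)

theorem hDistance_iff_unique_limits {X : Type*} (d : X → X → ℝ) (hd : IsDistance d) :
    (∀ x y : X, x ≠ y → ∃ δ > (0 : ℝ), ∀ z, ¬(d x z < δ ∧ d y z < δ)) ↔
    (∀ (u : ℕ → X) (x y : X),
      Tendsto (fun n => d x (u n)) atTop (nhds 0) →
      Tendsto (fun n => d y (u n)) atTop (nhds 0) → x = y) := by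
  constructor
  · intro H u x y hx hy
    by_contra hxy
    obtain ⟨δ, hδ, hsep⟩ := H x y hxy
    have hx' := (hx.eventually (eventually_lt_nhds hδ))
    have hy' := (hy.eventually (eventually_lt_nhds hδ))
    obtain ⟨n, h1, h2⟩ := (hx'.and hy').exists
    exact hsep (u n) ⟨h1, h2⟩
  · intro H x y hxy
    by_contra h
    push_neg at h
    choose u hu1 hu2 using fun n : ℕ => h (1 / (n + 1)) (by positivity)
    refine hxy (H u x y ?_ ?_)
    · have h0 : Tendsto (fun n : ℕ => (1 : ℝ) / (n + 1)) atTop (nhds 0) :=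
        tendsto_one_div_add_atTop_nhds_zero_nat
      exact squeeze_zero (fun n => hd.1 x (u n)) (fun n => (hu1 n).le) h0
    · have h0 : Tendsto (fun n : ℕ => (1 : ℝ) / (n + 1)) atTop (nhds 0) :=
        tendsto_one_div_add_atTop_nhds_zero_nat
      exact squeeze_zero (fun n => hd.1 y (u n)) (fun n => (hu2 n).le) h0
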